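/- Suppose a curve c is the concatenation α * e₁ * β * e₂ * γ * e₃ of three arcs α, β, γ and three segments e₁, e₂, e₃ whose endpoints lie in a set {v₁, v₂, v₃} of three vertices, with each segment joining two distinct vertices and all three possible segments appearing. Then for each vertex vᵢ, one of the two loops into which c decomposes at vᵢ contains exactly one of the arcs α, β, γ, and the arcs so distinguished at v₁, v₂, v₃ are pairwise distinct. -/
import Mathlib


/-- The curve is encoded by the cyclic sequence of slots
`α, e₁, β, e₂, γ, e₃`; `b j` is the vertex at the boundary between slots
`j-1` and `j`, so the segment `e₁` joins boundaries `1,2`, `e₂` joins `3,4`,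
`e₃` joins `5,0`, while the arc `k ∈ {0,1,2}` (i.e. `α, β, γ`) lies between
boundaries `2k` and `2k+1`.  The arc `k` lies on the loop obtained by going
forward from boundary position `p` to boundary position `q` iff
`(2k - p) % 6 < (q - p) % 6`. -/
def arcInLoop (p q : Fin 6) (k : Fin 3) : Prop :=
  (2 * (k : ℕ) + 6 - (p : ℕ)) % 6 < ((q : ℕ) + 6 - (p : ℕ)) % 6

instance (p q : Fin 6) (k : Fin 3) : Decidable (arcInLoop p q k) := by
  unfold arcInLoop; infer_instance

theorem stmt_15 (b : Fin 6 → Fin 3)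
    (he₁ : b 1 ≠ b 2) (he₂ : b 3 ≠ b 4) (he₃ : b 5 ≠ b 0)
    (hall : ({b 1, b 2} : Finset (Fin 3)) ≠ {b 3, b 4} ∧
      ({b 1, b 2} : Finset (Fin 3)) ≠ {b 5, b 0} ∧
      ({b 3, b 4} : Finset (Fin 3)) ≠ {b 5, b 0}) :
    ∃ σ : Fin 3 → Fin 3, Function.Bijective σ ∧
      ∀ i : Fin 3, ∃ p q : Fin 6, p ≠ q ∧ b p = i ∧ b q = i ∧
        ∀ k : Fin 3, arcInLoop p q k ↔ k = σ i := by
  revert he₁ he₂ he₃ hall; revert b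
  set_option maxRecDepth 10000 in decide
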